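/- For k ≥ 2 and j ∈ [1, n-k], the element s_{β_{k-1}} s_{β_k} ⋯ s_{β_{i-1}}(β_i), where i = a_k + j, equals the positive root Σ_{u=n-k-j+1}^{n-k} α_u + 2 Σ_{u=n-k+1}^{n-2} α_u + α_{n-1} + α_n (the middle sum being empty when k = 2). -/

import Mathlib

/-!
With `e_0, …, e_{n-1}` the standard basis, `α_m = e_{m-1} - e_m` for `m < n` and
`α_n = e_{n-2} + e_{n-1}`, so `s_{α_m}` swaps `e_{m-1}` and `e_m`, while `s_{α_n}` swaps
`e_{n-2}` and `e_{n-1}` up to sign. The `m`-th row `s_{β_{a_m+1}} ⋯ s_{β_{a_{m+1}}}` of the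
reduced word is `s_{α_n} s_{α_{n-2}} ⋯ s_{α_m}` or `s_{α_{n-1}} s_{α_{n-2}} ⋯ s_{α_m}`,
according to the parity of `n - m`; it sends `e_c ↦ e_{c-1}` for `m ≤ c ≤ n-2` and
`e_{n-1} ↦ (-1)^{n-m} e_{n-2}`. The reflections of row `k` preceding `β_i` turn `β_i` into
`e_{n-j-1} - (-1)^{n-k} e_{n-1}`; row `k-1` maps this to `e_{n-j-2} + e_{n-2}`, the two signs
cancelling; for `k > 2`, rows `k-2, …, 2` and the tail `s_{β_{k-1}} ⋯ s_{β_{n-1}}` of row 1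
each lower both indices by one more. The result `e_{n-k-j} + e_{n-k}` is the stated sum of
simple roots.
-/

noncomputable section

namespace SpinorDn

open Finset

/-- Euclidean dot product on `Fin n → ℝ`. -/
def dot {n : ℕ} (v w : Fin n → ℝ) : ℝ := ∑ u, v u * w u

/-- Orthogonal reflection in the root `β` (for `D_n` all roots have squared length `2`). -/
def sRefl {n : ℕ} (β : Fin n → ℝ) (v : Fin n → ℝ) : Fin n → ℝ :=
  v - (2 * dot v β / dot β β) • β

/-- Standard basis vector `e_i` (0-indexed). -/
def stdE {n : ℕ} (i : ℕ) : Fin n → ℝ := fun u => if (u : ℕ) = i then 1 else 0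

/-- Bourbaki simple roots of the root system `D_n`, indexed by `m ∈ [1,n]`:
`α_m = e_m - e_{m+1}` for `m < n` and `α_n = e_{n-1} + e_n` (1-indexed). -/
def simpleRoot (n m : ℕ) : Fin n → ℝ :=
  if m < n then stdE (m-1) - stdE m else stdE (n-2) + stdE (n-1)

/-- `a_k = (k-1)(2n-k)/2`. -/
def aval (n k : ℕ) : ℕ := (k-1)*(2*n-k)/2

/-- For `i ∈ [1, n(n-1)/2]`, the unique `k` with `a_k < i ≤ a_{k+1}`. -/
def kOf (n i : ℕ) : ℕ := ((Finset.Icc 1 n).filter (fun k => aval n k < i)).card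

/-- For `i = a_k + j`, the index `j`. -/
def jOf (n i : ℕ) : ℕ := i - aval n (kOf n i)

/-- Bourbaki index of the simple root `β_i` of the fixed reduced decomposition:
for `i = a_k + j` (`j ∈ [1, n-k]`), `β_i = α_{n-j}` if `j ≥ 2`, `β_i = α_n` if
`j = 1` and `n-k` is odd, and `β_i = α_{n-1}` if `j = 1` and `n-k` is even. -/
def betaIdx (n i : ℕ) : ℕ :=
  if 2 ≤ jOf n i then n - jOf n i
  else if (n - kOf n i) % 2 = 1 then n else n - 1

/-- The simple root `β_i`. -/
def beta (n i : ℕ) : Fin n → ℝ := simpleRoot n (betaIdx n i)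

/-- `word n i = s_{β_1} ∘ ⋯ ∘ s_{β_i}`, acting on the root space of `D_n`. -/
def word (n : ℕ) : ℕ → (Fin n → ℝ) → (Fin n → ℝ)
  | 0 => id
  | i+1 => word n i ∘ sRefl (beta n (i+1))

/-- The positive roots `γ_i = s_{β_1} ⋯ s_{β_{i-1}}(β_i)`. -/
def gammaRoot (n i : ℕ) : Fin n → ℝ := word n (i-1) (beta n i)

/-- Coroot pairing `⟨a^∨, b⟩ = 2⟨a,b⟩/⟨a,a⟩`. -/
def cpair {n : ℕ} (a b : Fin n → ℝ) : ℝ := 2 * dot a b / dot a a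

end SpinorDn

namespace SpinorDn

/-- `wordRange n a b = s_{β_a} ∘ s_{β_{a+1}} ∘ ⋯ ∘ s_{β_b}`. -/
def wordRange (n a b : ℕ) : (Fin n → ℝ) → (Fin n → ℝ) :=
  ((List.range' a (b + 1 - a)).map (beta n)).foldr (fun β g => sRefl β ∘ g) id

end SpinorDn

namespace SpinorDn

open Finset

variable {n : ℕ}

lemma dot_stdE_left (c : ℕ) (v : Fin n → ℝ) :
    dot (stdE c) v = if h : c < n then v ⟨c, h⟩ else 0 := by
  split_ifs with h
  · rw [dot, sum_eq_single ⟨c, h⟩]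
    · simp [stdE]
    · intro u _ hu
      simp [stdE, Fin.ext_iff.not.mp hu]
    · simp
  · exact sum_eq_zero fun u _ => by simp [stdE, show (u : ℕ) ≠ c by omega]

lemma dot_add_left (u v w : Fin n → ℝ) : dot (u + v) w = dot u w + dot v w :=
  add_dotProduct u v w

lemma dot_sub_left (u v w : Fin n → ℝ) : dot (u - v) w = dot u w - dot v w :=
  sub_dotProduct u v w

lemma dot_smul_left (r : ℝ) (v w : Fin n → ℝ) : dot (r • v) w = r * dot v w :=
  smul_dotProduct r v w

lemma simpleRoot_of_lt {m : ℕ} (hm : m < n) : simpleRoot n m = stdE (m - 1) - stdE m :=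
  if_pos hm

lemma simpleRoot_self : simpleRoot n n = stdE (n - 2) + stdE (n - 1) :=
  if_neg (lt_irrefl n)

lemma sRefl_of_dot_self {β : Fin n → ℝ} (hβ : dot β β = 2) (v : Fin n → ℝ) :
    sRefl β v = v - dot v β • β := by
  rw [sRefl, hβ, mul_div_cancel_left₀ _ two_ne_zero]

lemma dot_simpleRoot_self {m : ℕ} (hm : 1 ≤ m) (hn : 2 ≤ n) :
    dot (simpleRoot n m) (simpleRoot n m) = 2 := by
  unfold simpleRoot
  split_ifs <;>
    simp only [dot_add_left, dot_sub_left, dot_stdE_left, stdE, Pi.add_apply, Pi.sub_apply] <;>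
    split_ifs <;> first | omega | norm_num

lemma sRefl_simpleRoot_stdE {m : ℕ} (hm : 1 ≤ m) (hmn : m < n) (c : ℕ) :
    sRefl (simpleRoot n m) (stdE c) = stdE (Equiv.swap (m - 1) m c) := by
  rw [sRefl_of_dot_self (dot_simpleRoot_self hm (by omega))]
  funext u
  simp only [simpleRoot_of_lt hmn, dot_stdE_left, stdE, Equiv.swap_apply_def, Pi.sub_apply,
    Pi.smul_apply, smul_eq_mul]
  split_ifs <;> first | omega | norm_num

lemma sRefl_simpleRoot_last_stdE (hn : 2 ≤ n) (c : ℕ) :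
    sRefl (simpleRoot n n) (stdE c) =
      if c = n - 2 then -stdE (n - 1) else if c = n - 1 then -stdE (n - 2) else stdE c := by
  rw [sRefl_of_dot_self (dot_simpleRoot_self (by omega) hn)]
  funext u
  simp only [simpleRoot_self, dot_stdE_left]
  split_ifs <;>
    simp only [stdE, Pi.add_apply, Pi.sub_apply, Pi.smul_apply, Pi.neg_apply, smul_eq_mul] <;>
    split_ifs <;> first | omega | norm_num

lemma sum_simpleRoot_Icc {a b : ℕ} (ha : 1 ≤ a) (hab : a ≤ b + 1) (hbn : b < n) :
    ∑ u ∈ Icc a b, simpleRoot n u = stdE (a - 1) - stdE b := by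
  induction b with
  | zero => simp [show a = 1 by omega]
  | succ b ih =>
    rcases hab.lt_or_eq with hab | rfl
    · rw [sum_Icc_succ_top (by omega), ih (by omega) (by omega),
        simpleRoot_of_lt hbn, Nat.add_sub_cancel]
      abel
    · simp

def sReflLinear (β : Fin n → ℝ) : Module.End ℝ (Fin n → ℝ) where
  toFun := sRefl β
  map_add' v w := by
    funext u
    simp only [sRefl, dot_add_left, Pi.add_apply, Pi.sub_apply, Pi.smul_apply, smul_eq_mul]
    ring
  map_smul' r v := by
    funext u
    simp only [sRefl, dot_smul_left, Pi.smul_apply, Pi.sub_apply, smul_eq_mul,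
      RingHom.id_apply]
    ring

lemma sRefl_sub (β v w : Fin n → ℝ) : sRefl β (v - w) = sRefl β v - sRefl β w :=
  map_sub (sReflLinear β) v w

lemma wordRange_eq_coe_prod (a b : ℕ) :
    wordRange n a b =
      ⇑((List.range' a (b + 1 - a)).map fun p => sReflLinear (beta n p)).prod := by
  unfold wordRange
  induction List.range' a (b + 1 - a) with
  | nil => rfl
  | cons p l ih => simp only [List.map_cons, List.foldr_cons, List.prod_cons, ih]; rfl

lemma wordRange_add (a b : ℕ) (v w : Fin n → ℝ) :
    wordRange n a b (v + w) = wordRange n a b v + wordRange n a b w := by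
  rw [wordRange_eq_coe_prod]; exact map_add _ v w

lemma wordRange_sub (a b : ℕ) (v w : Fin n → ℝ) :
    wordRange n a b (v - w) = wordRange n a b v - wordRange n a b w := by
  rw [wordRange_eq_coe_prod]; exact map_sub _ v w

lemma wordRange_smul (a b : ℕ) (r : ℝ) (v : Fin n → ℝ) :
    wordRange n a b (r • v) = r • wordRange n a b v := by
  rw [wordRange_eq_coe_prod]; exact map_smul _ r v

lemma wordRange_of_lt {a b : ℕ} (h : b < a) : wordRange n a b = id := by
  simp [wordRange, show b + 1 - a = 0 by omega]

lemma wordRange_eq_comp {a b c : ℕ} (hab : a ≤ b + 1) (hbc : b ≤ c) :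
    wordRange n a c = wordRange n a b ∘ wordRange n (b + 1) c := by
  have hsplit : List.range' a (c + 1 - a) =
      List.range' a (b + 1 - a) ++ List.range' (b + 1) (c - b) := by
    have h := List.range'_append_1 (s := a) (m := b + 1 - a) (n := c - b)
    rwa [show a + (b + 1 - a) = b + 1 by omega, show b + 1 - a + (c - b) = c + 1 - a by omega,
      eq_comm] at h
  simp only [wordRange_eq_coe_prod, hsplit, List.map_append, List.prod_append,
    Module.End.coe_mul, show c + 1 - (b + 1) = c - b by omega]

lemma wordRange_self (a : ℕ) : wordRange n a a = sRefl (beta n a) := by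
  simp [wordRange]

lemma wordRange_eq_sRefl_comp {a b : ℕ} (h : a ≤ b) :
    wordRange n a b = sRefl (beta n a) ∘ wordRange n (a + 1) b := by
  rw [wordRange_eq_comp le_self_add h, wordRange_self]

lemma wordRange_succ_right {a b : ℕ} (h : a ≤ b + 1) :
    wordRange n a (b + 1) = wordRange n a b ∘ sRefl (beta n (b + 1)) := by
  rw [wordRange_eq_comp h le_self_add, wordRange_self]

lemma aval_one : aval n 1 = 0 := by simp [aval]

lemma aval_succ {k : ℕ} (hk : 1 ≤ k) (hkn : k ≤ n) : aval n (k + 1) = aval n k + (n - k) := by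
  have key : k * (2 * n - (k + 1)) = (k - 1) * (2 * n - k) + (n - k) * 2 := by
    zify [show k ≤ 2 * n by omega, show k + 1 ≤ 2 * n by omega, hk, hkn]
    ring
  rw [aval, aval, Nat.add_sub_cancel, key, Nat.add_mul_div_right _ _ two_pos]

lemma aval_le_aval {k l : ℕ} (hk : 1 ≤ k) (hkl : k ≤ l) (hln : l ≤ n) :
    aval n k ≤ aval n l := by
  induction l, hkl using Nat.le_induction with
  | base => rfl
  | succ l hkl ih => rw [aval_succ (by omega) (by omega)]; exact (ih (by omega)).trans le_self_add

lemma kOf_aval_add {k p : ℕ} (hk : 1 ≤ k) (hp : 1 ≤ p) (hpn : p ≤ n - k) :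
    kOf n (aval n k + p) = k := by
  have hrow : {l ∈ Icc 1 n | aval n l < aval n k + p} = Icc 1 k := by
    ext l
    simp only [mem_filter, mem_Icc]
    constructor
    · rintro ⟨⟨hl, hln⟩, hlt⟩
      refine ⟨hl, ?_⟩
      by_contra! hkl
      have := aval_le_aval (n := n) (by omega) hkl hln
      rw [aval_succ hk (by omega)] at this
      omega
    · rintro ⟨hl, hlk⟩
      have := aval_le_aval (n := n) hl hlk (by omega)
      exact ⟨⟨hl, by omega⟩, by omega⟩
  rw [kOf, hrow, Nat.card_Icc, Nat.add_sub_cancel]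

lemma jOf_aval_add {k p : ℕ} (hk : 1 ≤ k) (hp : 1 ≤ p) (hpn : p ≤ n - k) :
    jOf n (aval n k + p) = p := by
  rw [jOf, kOf_aval_add hk hp hpn, Nat.add_sub_cancel_left]

lemma beta_aval_add {k p : ℕ} (hk : 1 ≤ k) (hp : 2 ≤ p) (hpn : p ≤ n - k) :
    beta n (aval n k + p) = simpleRoot n (n - p) := by
  rw [beta, betaIdx, jOf_aval_add hk (by omega) hpn, if_pos hp]

lemma beta_aval_add_one_of_even {k : ℕ} (hk : 1 ≤ k) (hkn : k < n) (h : Even (n - k)) :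
    beta n (aval n k + 1) = simpleRoot n (n - 1) := by
  rw [beta, betaIdx, jOf_aval_add hk le_rfl (by omega), kOf_aval_add hk le_rfl (by omega),
    if_neg (by omega), if_neg (by rw [← Nat.odd_iff]; exact Nat.not_odd_iff_even.mpr h)]

lemma beta_aval_add_one_of_odd {k : ℕ} (hk : 1 ≤ k) (hkn : k < n) (h : Odd (n - k)) :
    beta n (aval n k + 1) = simpleRoot n n := by
  rw [beta, betaIdx, jOf_aval_add hk le_rfl (by omega), kOf_aval_add hk le_rfl (by omega),
    if_neg (by omega), if_pos (Nat.odd_iff.mp h)]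

lemma beta_aval_add_one {k : ℕ} (hk : 1 ≤ k) (hkn : k < n) :
    beta n (aval n k + 1) = stdE (n - 2) - (-1 : ℝ) ^ (n - k) • stdE (n - 1) := by
  rcases Nat.even_or_odd (n - k) with h | h
  · rw [beta_aval_add_one_of_even hk hkn h, simpleRoot_of_lt (by omega), h.neg_one_pow, one_smul,
      show n - 1 - 1 = n - 2 by omega]
  · rw [beta_aval_add_one_of_odd hk hkn h, simpleRoot_self, h.neg_one_pow, neg_one_smul,
      sub_neg_eq_add]

lemma sRefl_beta_aval_add_one_stdE {k : ℕ} (hk : 1 ≤ k) (hkn : k < n) (c : ℕ) :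
    sRefl (beta n (aval n k + 1)) (stdE c) =
      if c = n - 2 then (-1 : ℝ) ^ (n - k) • stdE (n - 1)
      else if c = n - 1 then (-1 : ℝ) ^ (n - k) • stdE (n - 2) else stdE c := by
  rcases Nat.even_or_odd (n - k) with h | h
  · rw [beta_aval_add_one_of_even hk hkn h, sRefl_simpleRoot_stdE (by omega) (by omega),
      h.neg_one_pow, one_smul, one_smul, Equiv.swap_apply_def, show n - 1 - 1 = n - 2 by omega]
    split_ifs <;> rfl
  · rw [beta_aval_add_one_of_odd hk hkn h, sRefl_simpleRoot_last_stdE (by omega), h.neg_one_pow,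
      neg_one_smul, neg_one_smul]

lemma wordRange_stdE_of_chain {a q r : ℕ} (hq : 2 ≤ q) (hqr : q ≤ r + 1) (hrn : r < n)
    (hβ : ∀ p, q ≤ p → p ≤ r → beta n (a + p) = simpleRoot n (n - p)) (c : ℕ) :
    wordRange n (a + q) (a + r) (stdE c) =
      stdE (if c = n - r - 1 then n - q else if n - r ≤ c ∧ c ≤ n - q then c - 1 else c) := by
  induction r generalizing c with
  | zero => omega
  | succ r ih =>
    rcases hqr.lt_or_eq with hqr | rfl
    · rw [← add_assoc, wordRange_succ_right (by omega), Function.comp_apply,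
        add_assoc, hβ _ (by omega) le_rfl, sRefl_simpleRoot_stdE (by omega) (by omega),
        ih (by omega) (by omega) fun p hp hpr => hβ p hp (by omega)]
      congr 1
      simp only [Equiv.swap_apply_def]
      split_ifs <;> omega
    · rw [wordRange_of_lt (by omega), id]
      congr 1
      split_ifs <;> omega

lemma wordRange_row_tail_stdE {m q c : ℕ} (hm : 1 ≤ m) (hq : 2 ≤ q) (hmc : m ≤ c)
    (hcq : c ≤ n - q) :
    wordRange n (aval n m + q) (aval n (m + 1)) (stdE c) = stdE (c - 1) := by
  rw [aval_succ hm (by omega), wordRange_stdE_of_chain hq (by omega) (by omega)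
      fun p hp hpn => beta_aval_add hm (by omega) hpn,
    if_neg (by omega), if_pos (by omega)]

lemma wordRange_row_stdE {m c : ℕ} (hm : 1 ≤ m) (hmc : m ≤ c) (hcn : c ≤ n - 2) :
    wordRange n (aval n m + 1) (aval n (m + 1)) (stdE c) = stdE (c - 1) := by
  rw [wordRange_eq_sRefl_comp (by rw [aval_succ hm (by omega)]; omega), Function.comp_apply,
    show aval n m + 1 + 1 = aval n m + 2 from rfl, wordRange_row_tail_stdE hm le_rfl hmc hcn,
    sRefl_beta_aval_add_one_stdE hm (by omega), if_neg (by omega), if_neg (by omega)]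

lemma wordRange_row_stdE_last {m : ℕ} (hm : 1 ≤ m) (hmn : m ≤ n - 2) :
    wordRange n (aval n m + 1) (aval n (m + 1)) (stdE (n - 1)) =
      (-1 : ℝ) ^ (n - m) • stdE (n - 2) := by
  rw [aval_succ hm (by omega), wordRange_eq_sRefl_comp (by omega), Function.comp_apply,
    show aval n m + 1 + 1 = aval n m + 2 from rfl,
    wordRange_stdE_of_chain le_rfl (by omega) (by omega) fun p hp hpn => beta_aval_add hm hp hpn,
    if_neg (by omega), if_neg (by omega), sRefl_beta_aval_add_one_stdE hm (by omega),
    if_neg (by omega), if_pos rfl]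

lemma wordRange_row_partial {m j : ℕ} (hm : 1 ≤ m) (hj1 : 1 ≤ j) (hj : j ≤ n - m) :
    wordRange n (aval n m + 1) (aval n m + j - 1) (beta n (aval n m + j)) =
      stdE (n - j - 1) - (-1 : ℝ) ^ (n - m) • stdE (n - 1) := by
  rcases hj1.eq_or_lt with rfl | hj2
  · rw [wordRange_of_lt (by omega), id, beta_aval_add_one hm (by omega),
      show n - 1 - 1 = n - 2 by omega]
  · rw [beta_aval_add hm hj2 hj, simpleRoot_of_lt (by omega),
      show aval n m + j - 1 = aval n m + (j - 1) by omega, wordRange_eq_sRefl_comp (by omega),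
      Function.comp_apply, show aval n m + 1 + 1 = aval n m + 2 from rfl, wordRange_sub,
      wordRange_stdE_of_chain le_rfl (by omega) (by omega) fun p hp hpn =>
        beta_aval_add hm hp (by omega),
      wordRange_stdE_of_chain le_rfl (by omega) (by omega) fun p hp hpn =>
        beta_aval_add hm hp (by omega),
      if_neg (by omega), if_neg (by omega), if_pos (by omega), sRefl_sub,
      sRefl_beta_aval_add_one_stdE hm (by omega), sRefl_beta_aval_add_one_stdE hm (by omega),
      if_neg (by omega), if_neg (by omega), if_pos rfl]

lemma neg_one_pow_mul_neg_one_pow_succ {R : Type*} [Ring R] (a : ℕ) :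
    (-1 : R) ^ a * (-1) ^ (a + 1) = -1 := by
  rw [pow_succ, ← mul_assoc, ← pow_add, Even.neg_one_pow ⟨a, rfl⟩, one_mul]

lemma wordRange_eq_row_comp {m k j : ℕ} (hm : 1 ≤ m) (hmk : m < k) (hkn : k < n)
    (hj : 1 ≤ j) :
    wordRange n (aval n m + 1) (aval n k + j - 1) =
      wordRange n (aval n m + 1) (aval n (m + 1)) ∘
        wordRange n (aval n (m + 1) + 1) (aval n k + j - 1) := by
  have := aval_le_aval (n := n) (by omega : 1 ≤ m + 1) hmk hkn.le
  exact wordRange_eq_comp (by rw [aval_succ hm (by omega)]; omega) (by omega)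

lemma wordRange_rows_beta {k j m : ℕ} (hj1 : 1 ≤ j) (hj : j ≤ n - k) (d : ℕ) (hm : 1 ≤ m)
    (hmk : m + d + 1 = k) :
    wordRange n (aval n m + 1) (aval n k + j - 1) (beta n (aval n k + j)) =
      stdE (n - j - 2 - d) + stdE (n - 2 - d) := by
  rw [wordRange_eq_row_comp hm (by omega) (by omega) hj1, Function.comp_apply]
  induction d generalizing m with
  | zero =>
    subst hmk
    rw [wordRange_row_partial (by omega) hj1 hj, wordRange_sub, wordRange_smul,
      wordRange_row_stdE hm (by omega) (by omega), wordRange_row_stdE_last hm (by omega), smul_smul,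
      show n - m = n - (m + 1) + 1 by omega, neg_one_pow_mul_neg_one_pow_succ, neg_one_smul,
      sub_neg_eq_add]
    rfl
  | succ d ih =>
    rw [wordRange_eq_row_comp (by omega) (by omega) (by omega) hj1, Function.comp_apply,
      ih (by omega) (by omega), wordRange_add, wordRange_row_stdE hm (by omega) (by omega),
      wordRange_row_stdE hm (by omega) (by omega)]
    rfl

lemma wordRange_beta_aval_add {k j : ℕ} (hk : 2 ≤ k) (hj1 : 1 ≤ j) (hj : j ≤ n - k) :
    wordRange n (k - 1) (aval n k + j - 1) (beta n (aval n k + j)) =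
      stdE (n - k - j) + stdE (n - k) := by
  rcases hk.eq_or_lt with rfl | hk
  · rw [show 2 - 1 = aval n 1 + 1 by rw [aval_one], wordRange_rows_beta hj1 hj 0 le_rfl rfl]
    congr 2
    omega
  · have := aval_le_aval (n := n) one_le_two hk.le (by omega)
    rw [show k - 1 = aval n 1 + (k - 1) by rw [aval_one, zero_add],
      wordRange_eq_comp (b := aval n 2) (by rw [aval_one, aval_succ le_rfl (by omega)]; omega)
        (by omega),
      Function.comp_apply, wordRange_rows_beta hj1 hj (k - 3) one_le_two (by omega), wordRange_add,
      wordRange_row_tail_stdE le_rfl (by omega) (by omega) (by omega),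
      wordRange_row_tail_stdE le_rfl (by omega) (by omega) (by omega)]
    congr 2 <;> omega

end SpinorDn

open SpinorDn Finset in
theorem stmt_6_general (n k j i : ℕ) (hk2 : 2 ≤ k)
    (hj1 : 1 ≤ j) (hj : j ≤ n - k) (hi : i = aval n k + j) :
    wordRange n (k-1) (i-1) (beta n i) =
      (∑ u ∈ Finset.Icc (n-k-j+1) (n-k), simpleRoot n u)
        + (2 : ℝ) • (∑ u ∈ Finset.Icc (n-k+1) (n-2), simpleRoot n u)
        + simpleRoot n (n-1) + simpleRoot n n := by
  subst hi
  rw [wordRange_beta_aval_add hk2 hj1 hj, sum_simpleRoot_Icc (by omega) (by omega) (by omega),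
    sum_simpleRoot_Icc (by omega) (by omega) (by omega), simpleRoot_of_lt (by omega),
    simpleRoot_self, Nat.add_sub_cancel, Nat.add_sub_cancel, show n - 1 - 1 = n - 2 by omega]
  module

open SpinorDn Finset in
/-- For `k ≥ 2` and `j ∈ [1, n-k]`, with `i = a_k + j`, the element
`s_{β_{k-1}} s_{β_k} ⋯ s_{β_{i-1}}(β_i)` equals the positive root
`Σ_{u=n-k-j+1}^{n-k} α_u + 2 Σ_{u=n-k+1}^{n-2} α_u + α_{n-1} + α_n`
(the middle sum being empty when `k = 2`). -/
theorem stmt_6 (n k j i : ℕ) (hn : 2 ≤ n) (hk2 : 2 ≤ k) (hk : k ≤ n - 1)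
    (hj1 : 1 ≤ j) (hj : j ≤ n - k) (hi : i = aval n k + j) :
    wordRange n (k-1) (i-1) (beta n i) =
      (∑ u ∈ Finset.Icc (n-k-j+1) (n-k), simpleRoot n u)
        + (2 : ℝ) • (∑ u ∈ Finset.Icc (n-k+1) (n-2), simpleRoot n u)
        + simpleRoot n (n-1) + simpleRoot n n :=
  stmt_6_general n k j i hk2 hj1 hj hi

end
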